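/- For each t ∈ [0,1), the spectrum of C_t, computed in the algebra of continuous linear endomorphisms of ω, equals Λ, and the set of eigenvalues of C_t on ω also equals Λ; each eigenvalue 1/(m+1) is simple, with eigenspace Ker((1/(m+1))I − C_t) = span{x^{[m]}}. -/

import Mathlib

/-!
On `ω` the operator `C_t` is lower triangular with the distinct diagonal entries `1/(n+1)`.
For `μ ∉ Λ` the system `(μ - C_t) y = x` is therefore solved coordinate by coordinate, and the
solution is continuous in `x` because `y_n` only involves `x_0, …, x_n`. For `μ = 1/(m+1)` the
same forward substitution forces the coordinates of an eigenvector below `m` to vanish and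
determines those above `m` from the `m`-th one, so the eigenspace is a line. It is spanned by
`x^{[m]}` by the hockey-stick identity `∑_{i ≤ n} C(i,m) = C(n+1,m+1)` together with
`(n+1) C(n,m) = (m+1) C(n+1,m+1)`.
-/

/-- The generalized Cesàro operator `C_t` acting on complex sequences:
`(C_t x)_n = (1/(n+1)) ∑_{i=0}^n t^{n-i} x_i`. -/
noncomputable def genCesaro (t : ℝ) (x : ℕ → ℂ) : ℕ → ℂ :=
  fun n => (1 / ((n : ℂ) + 1)) * ∑ i ∈ Finset.range (n + 1), (t : ℂ) ^ (n - i) * x i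

/-- The eigenvector `x^{[m]}`: `x^{[m]}_n = 0` for `n < m` and
`x^{[m]}_n = C(n,m) t^{n-m}` for `n ≥ m`. -/
noncomputable def eigvec (t : ℝ) (m : ℕ) : ℕ → ℂ :=
  fun n => if n < m then 0 else (Nat.choose n m : ℂ) * (t : ℂ) ^ (n - m)

open Finset

lemma sum_range_succ_pow_mul {R : Type*} [CommSemiring R] (t : R) (x : ℕ → R) (n : ℕ) :
    ∑ i ∈ range (n + 2), t ^ (n + 1 - i) * x i
      = t * ∑ i ∈ range (n + 1), t ^ (n - i) * x i + x (n + 1) := by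
  rw [sum_range_succ, mul_sum, Nat.sub_self, pow_zero, one_mul]
  congr 1
  refine sum_congr rfl fun i hi => ?_
  rw [← mul_assoc, ← pow_succ', Nat.sub_add_comm (Nat.lt_succ_iff.mp (mem_range.mp hi))]

lemma sum_range_pow_mul_of_forall_lt_eq_zero {R : Type*} [CommSemiring R] (t : R)
    {x : ℕ → R} {n : ℕ} (hx : ∀ i < n, x i = 0) :
    ∑ i ∈ range (n + 1), t ^ (n - i) * x i = x n := by
  rw [sum_range_succ, sum_eq_zero fun i hi => by rw [hx i (mem_range.mp hi), mul_zero]]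
  simp

lemma sum_range_choose_eq_choose_succ (n m : ℕ) :
    ∑ i ∈ range (n + 1), i.choose m = (n + 1).choose (m + 1) := by
  induction n with
  | zero => cases m <;> simp [Nat.choose_eq_zero_of_lt]
  | succ n ih => rw [sum_range_succ, ih, Nat.choose_succ_succ' (n + 1), add_comm]

lemma genCesaro_sub (t : ℝ) (x y : ℕ → ℂ) :
    genCesaro t (x - y) = genCesaro t x - genCesaro t y := by
  funext n
  simp only [genCesaro, Pi.sub_apply, mul_sub, sum_sub_distrib]

lemma genCesaro_smul (t : ℝ) (c : ℂ) (x : ℕ → ℂ) :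
    genCesaro t (c • x) = c • genCesaro t x := by
  funext n
  simp only [genCesaro, Pi.smul_apply, smul_eq_mul, mul_sum]
  exact sum_congr rfl fun i _ => by ring

theorem eq_zero_of_genCesaro_eq_smul {t : ℝ} {μ : ℂ} {x : ℕ → ℂ}
    (hx : genCesaro t x = μ • x) (h : ∀ n : ℕ, μ = 1 / ((n : ℂ) + 1) → x n = 0) : x = 0 := by
  funext n
  induction n using Nat.strong_induction_on with
  | _ n ih =>
    by_cases hμ : μ = 1 / ((n : ℂ) + 1)
    · exact h n hμ
    have hn := congrFun hx n
    simp only [genCesaro, Pi.smul_apply, smul_eq_mul,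
      sum_range_pow_mul_of_forall_lt_eq_zero _ ih] at hn
    have hdiag : (μ - 1 / ((n : ℂ) + 1)) * x n = 0 := by linear_combination -hn
    exact (mul_eq_zero.mp hdiag).resolve_left (sub_ne_zero.mpr hμ)

lemma eigvec_apply (t : ℝ) (m n : ℕ) : eigvec t m n = (n.choose m : ℂ) * (t : ℂ) ^ (n - m) := by
  unfold eigvec
  split_ifs with h
  · simp [Nat.choose_eq_zero_of_lt h]
  · rfl

lemma eigvec_self (t : ℝ) (m : ℕ) : eigvec t m m = 1 := by
  simp [eigvec_apply]

lemma eigvec_ne_zero (t : ℝ) (m : ℕ) : eigvec t m ≠ 0 := fun h => by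
  simpa [h] using eigvec_self t m

theorem genCesaro_eigvec (t : ℝ) (m : ℕ) :
    genCesaro t (eigvec t m) = (1 / ((m : ℂ) + 1)) • eigvec t m := by
  funext n
  have hterm : ∀ i ∈ range (n + 1), (t : ℂ) ^ (n - i) * eigvec t m i
      = (i.choose m : ℂ) * (t : ℂ) ^ (n - m) := by
    intro i hi
    rw [eigvec_apply]
    rcases lt_or_ge i m with him | hmi
    · simp [Nat.choose_eq_zero_of_lt him]
    · rw [mul_left_comm, ← pow_add]
      congr 2
      have := mem_range.mp hi
      omega
  have hchoose : ((n : ℂ) + 1) * n.choose m = (n + 1).choose (m + 1) * ((m : ℂ) + 1) := by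
    exact_mod_cast Nat.add_one_mul_choose_eq n m
  simp only [genCesaro, Pi.smul_apply, smul_eq_mul]
  rw [sum_congr rfl hterm, ← sum_mul, ← Nat.cast_sum, sum_range_choose_eq_choose_succ,
    eigvec_apply]
  field_simp
  linear_combination (t : ℂ) ^ (n - m) * hchoose.symm

theorem eq_smul_eigvec_of_genCesaro_eq {t : ℝ} {m : ℕ} {x : ℕ → ℂ}
    (hx : genCesaro t x = (1 / ((m : ℂ) + 1)) • x) : x = x m • eigvec t m := by
  refine sub_eq_zero.mp (eq_zero_of_genCesaro_eq_smul (t := t) (μ := 1 / ((m : ℂ) + 1)) ?_ ?_)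
  · rw [genCesaro_sub, genCesaro_smul, genCesaro_eigvec, hx, smul_sub, smul_comm]
  · intro n hn
    obtain rfl : n = m := by simpa using hn.symm
    simp [eigvec_self]

section Resolvent

variable (t : ℝ) (μ : ℂ)

/-- `cesaroResolventSum t μ n x = ∑_{i<n} t^(n-1-i) y_i` where `(μ - C_t) y = x`; the `n`-th
equation of this triangular system reads `(μ - 1/(n+1)) y_n = x_n + t/(n+1) · (this sum)`. -/
noncomputable def cesaroResolventSum : ℕ → ((ℕ → ℂ) →L[ℂ] ℂ)
  | 0 => 0
  | n + 1 => (t : ℂ) • cesaroResolventSum n + (μ - 1 / ((n : ℂ) + 1))⁻¹ •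
      (ContinuousLinearMap.proj n + ((t : ℂ) / ((n : ℂ) + 1)) • cesaroResolventSum n)

noncomputable def cesaroResolvent : (ℕ → ℂ) →L[ℂ] (ℕ → ℂ) :=
  ContinuousLinearMap.pi fun n =>
    cesaroResolventSum t μ (n + 1) - (t : ℂ) • cesaroResolventSum t μ n

lemma sum_range_pow_mul_cesaroResolvent (x : ℕ → ℂ) (n : ℕ) :
    ∑ i ∈ range (n + 1), (t : ℂ) ^ (n - i) * cesaroResolvent t μ x i
      = cesaroResolventSum t μ (n + 1) x := by
  induction n with
  | zero => simp [cesaroResolvent, cesaroResolventSum]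
  | succ n ih =>
    rw [sum_range_succ_pow_mul, ih]
    simp [cesaroResolvent]

theorem smul_cesaroResolvent_sub_genCesaro (hμ : ∀ n : ℕ, μ ≠ 1 / ((n : ℂ) + 1))
    (x : ℕ → ℂ) : μ • cesaroResolvent t μ x - genCesaro t (cesaroResolvent t μ x) = x := by
  funext n
  have hd : μ - 1 / ((n : ℂ) + 1) ≠ 0 := sub_ne_zero.mpr (hμ n)
  simp only [Pi.sub_apply, Pi.smul_apply, smul_eq_mul, genCesaro, sum_range_pow_mul_cesaroResolvent]
  simp only [cesaroResolvent, cesaroResolventSum, ContinuousLinearMap.pi_apply,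
    ContinuousLinearMap.proj_apply, sub_apply, add_apply, smul_apply, smul_eq_mul]
  linear_combination (x n + (t : ℂ) / ((n : ℂ) + 1) * cesaroResolventSum t μ n x) *
    inv_mul_cancel₀ hd

end Resolvent

theorem isUnit_algebraMap_sub_of_forall_ne {t : ℝ} {L : (ℕ → ℂ) →L[ℂ] (ℕ → ℂ)}
    (hL : ∀ x, L x = genCesaro t x) {μ : ℂ} (hμ : ∀ n : ℕ, μ ≠ 1 / ((n : ℂ) + 1)) :
    IsUnit (algebraMap ℂ _ μ - L) := by
  set A := algebraMap ℂ ((ℕ → ℂ) →L[ℂ] (ℕ → ℂ)) μ - L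
  have hA : ∀ x, A x = μ • x - genCesaro t x := fun x => by
    simp [A, hL]
  have hright : ∀ x, A (cesaroResolvent t μ x) = x := fun x => by
    rw [hA, smul_cesaroResolvent_sub_genCesaro t μ hμ]
  have hinj : Function.Injective A := fun x y hxy => by
    have hker : genCesaro t (x - y) = μ • (x - y) := by
      rw [← sub_eq_zero, ← neg_eq_zero, neg_sub, ← hA, map_sub, hxy, sub_self]
    exact sub_eq_zero.mp (eq_zero_of_genCesaro_eq_smul hker fun n h => absurd h (hμ n))
  exact ⟨⟨A, cesaroResolvent t μ, ContinuousLinearMap.ext hright,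
    ContinuousLinearMap.ext fun x => hinj (hright (A x))⟩, rfl⟩

theorem not_isUnit_algebraMap_sub {t : ℝ} {L : (ℕ → ℂ) →L[ℂ] (ℕ → ℂ)}
    (hL : ∀ x, L x = genCesaro t x) (m : ℕ) :
    ¬IsUnit (algebraMap ℂ _ (1 / ((m : ℂ) + 1)) - L) := by
  rintro ⟨u, hu⟩
  apply eigvec_ne_zero t m
  calc eigvec t m = (↑u⁻¹ * ↑u : (ℕ → ℂ) →L[ℂ] (ℕ → ℂ)) (eigvec t m) := by simp
    _ = 0 := by simp [hu, hL, genCesaro_eigvec]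

theorem genCesaro_spectrum_omega_general (t : ℝ)
    (L : (ℕ → ℂ) →L[ℂ] (ℕ → ℂ)) (hL : ∀ x, L x = genCesaro t x) :
    spectrum ℂ L = {z : ℂ | ∃ n : ℕ, z = 1 / ((n : ℂ) + 1)} ∧
    {μ : ℂ | ∃ x : ℕ → ℂ, x ≠ 0 ∧ genCesaro t x = μ • x} =
      {z : ℂ | ∃ n : ℕ, z = 1 / ((n : ℂ) + 1)} ∧
    ∀ m : ℕ, {x : ℕ → ℂ | genCesaro t x = (1 / ((m : ℂ) + 1)) • x} =
      Set.range (fun c : ℂ => c • eigvec t m) := by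
  refine ⟨Set.ext fun μ => ⟨fun hμ => ?_, ?_⟩, Set.ext fun μ => ⟨?_, ?_⟩,
    fun m => Set.ext fun x => ⟨fun hx => ⟨x m, (eq_smul_eigvec_of_genCesaro_eq hx).symm⟩, ?_⟩⟩
  · by_contra hne
    exact hμ (isUnit_algebraMap_sub_of_forall_ne hL fun n h => hne ⟨n, h⟩)
  · rintro ⟨m, rfl⟩
    exact not_isUnit_algebraMap_sub hL m
  · rintro ⟨x, hx0, hx⟩
    by_contra hne
    exact hx0 (eq_zero_of_genCesaro_eq_smul hx fun n h => absurd ⟨n, h⟩ hne)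
  · rintro ⟨m, rfl⟩
    exact ⟨eigvec t m, eigvec_ne_zero t m, genCesaro_eigvec t m⟩
  · rintro ⟨c, rfl⟩
    rw [Set.mem_ofPred_eq, genCesaro_smul, genCesaro_eigvec, smul_comm]

/-- For each `t ∈ [0,1)`: given the continuous linear operator `L` on `ω = ℂ^ℕ`
(product topology) induced by `C_t`, the spectrum of `L` in the algebra of
continuous linear endomorphisms of `ω` equals `Λ = {1/(n+1) : n ∈ ℕ}`, the set of
eigenvalues of `C_t` equals `Λ`, and each eigenvalue `1/(m+1)` is simple with
eigenspace `Ker((1/(m+1))I - C_t) = span{x^{[m]}}`. -/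
theorem genCesaro_spectrum_omega (t : ℝ) (ht : t ∈ Set.Ico (0 : ℝ) 1)
    (L : (ℕ → ℂ) →L[ℂ] (ℕ → ℂ)) (hL : ∀ x, L x = genCesaro t x) :
    spectrum ℂ L = {z : ℂ | ∃ n : ℕ, z = 1 / ((n : ℂ) + 1)} ∧
    {μ : ℂ | ∃ x : ℕ → ℂ, x ≠ 0 ∧ genCesaro t x = μ • x} =
      {z : ℂ | ∃ n : ℕ, z = 1 / ((n : ℂ) + 1)} ∧
    ∀ m : ℕ, {x : ℕ → ℂ | genCesaro t x = (1 / ((m : ℂ) + 1)) • x} =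
      Set.range (fun c : ℂ => c • eigvec t m) :=
  genCesaro_spectrum_omega_general t L hL
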